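/- Let q ∈ ℝ, d ∈ ℤ, J a finite index set, and for each j ∈ J let a_j ∈ ℝ, k_j ∈ ℝ, and let σ_j be an even integer. Set ε_j = +1 if σ_j ≡ 2 (mod 4) and ε_j = −1 if σ_j ≡ 0 (mod 4). In ℂ[[t]] define G = exp(q t²/2) · Σ_{j∈J} a_j exp(k_j t) and H = exp(q t²/2) · Σ_{j∈J} ε_j a_j exp(k_j t), and assume that both G and H have vanishing coefficients in every degree n with n ≢ d (mod 2). Then 2·[part of G in degrees ≡ d+2 (mod 4)] + 2·[part of H in degrees ≡ d (mod 4)] = 2 exp(q t²/2) · Σ_{j : σ_j ≡ 2 (mod 4)} a_j exp(k_j t) − 2 i^{−d} exp(−q t²/2) · Σ_{j : σ_j ≡ 0 (mod 4)} a_j exp(i k_j t). -/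

import Mathlib

/-- The formal exponential power series `exp(c t) ∈ ℂ[[t]]`. -/
noncomputable def pexp (c : ℂ) : PowerSeries ℂ :=
  PowerSeries.mk fun n => c ^ n / n.factorial

/-- The formal Gaussian power series `exp(q t²/2) ∈ ℂ[[t]]`. -/
noncomputable def pgauss (q : ℂ) : PowerSeries ℂ :=
  PowerSeries.mk fun n =>
    if Even n then (q / 2) ^ (n / 2) / (n / 2).factorial else 0

/-- The part of a formal power series in degrees `≡ d (mod 4)`. -/
noncomputable def part4 (d : ℤ) (F : PowerSeries ℂ) : PowerSeries ℂ :=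
  PowerSeries.mk fun n =>
    if (n : ℤ) % 4 = d % 4 then PowerSeries.coeff n F else 0

/-!
With `S₂`, `S₀` the Gaussian-weighted sums over `σ j ≡ 2` and `σ j ≡ 0 (mod 4)`, we have
`G = S₂ + S₀` and `H = S₂ - S₀`. The substitution `t ↦ i t` sends `exp(q t²/2) exp(k t)` to
`exp(-q t²/2) exp(i k t)` and multiplies degree `n` by `i ^ n`. For a series living in degrees
`≡ d (mod 2)`, `i ^ (n - d) = ±1` according as `n ≡ d` or `n ≡ d + 2 (mod 4)`, so
`i ^ (-d) F(i t)` is the part of `F` in degrees `≡ d` minus its part in degrees `≡ d + 2`,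
while `F` is their sum. Applying this to `G` and `H` gives the identity.
-/

open PowerSeries Complex

lemma rescale_pexp (a c : ℂ) : rescale a (pexp c) = pexp (a * c) := by
  ext n
  simp only [pexp, coeff_rescale, coeff_mk, mul_pow, mul_div_assoc]

lemma rescale_pgauss (a q : ℂ) : rescale a (pgauss q) = pgauss (a ^ 2 * q) := by
  ext n
  simp only [pgauss, coeff_rescale, coeff_mk]
  split_ifs with hn
  · obtain ⟨m, rfl⟩ := hn
    rw [← two_mul, Nat.mul_div_cancel_left m two_pos]
    ring
  · rw [mul_zero]

lemma rescale_C {R : Type*} [CommSemiring R] (a r : R) : rescale a (C r) = C r := by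
  ext n
  rcases n with _ | n <;> simp [coeff_C]

lemma I_zpow_neg_mul_I_pow (d : ℤ) (n : ℕ) : I ^ (-d) * I ^ n = I ^ (((n : ℤ) - d) % 4) := by
  rw [← zpow_natCast, ← zpow_add₀ I_ne_zero, ← I_zpow_eq_zpow_mod, neg_add_eq_sub]

section Parity

variable {d : ℤ} {F : PowerSeries ℂ}

lemma coeff_part4 (n : ℕ) :
    coeff n (part4 d F) = if (n : ℤ) % 4 = d % 4 then coeff n F else 0 :=
  coeff_mk _ _

lemma part4_add_part4_add_two (hF : ∀ n : ℕ, ¬ ((n : ℤ) % 2 = d % 2) → coeff n F = 0) :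
    part4 d F + part4 (d + 2) F = F := by
  ext n
  rw [map_add, coeff_part4, coeff_part4]
  by_cases hn : (n : ℤ) % 2 = d % 2
  · rcases (by omega : (n : ℤ) % 4 = d % 4 ∨ (n : ℤ) % 4 = (d + 2) % 4) with h | h
    · rw [if_pos h, if_neg (by omega), add_zero]
    · rw [if_neg (by omega), if_pos h, zero_add]
  · rw [hF n hn]; simp

lemma I_zpow_neg_smul_rescale_I
    (hF : ∀ n : ℕ, ¬ ((n : ℤ) % 2 = d % 2) → coeff n F = 0) :
    I ^ (-d) • rescale I F = part4 d F - part4 (d + 2) F := by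
  ext n
  rw [map_sub, coeff_part4, coeff_part4, coeff_smul, coeff_rescale, smul_eq_mul, ← mul_assoc,
    I_zpow_neg_mul_I_pow]
  by_cases hn : (n : ℤ) % 2 = d % 2
  · rcases (by omega : ((n : ℤ) - d) % 4 = 0 ∨ ((n : ℤ) - d) % 4 = 2) with h | h
    · rw [h, if_pos (by omega), if_neg (by omega), zpow_zero, one_mul, sub_zero]
    · rw [h, if_neg (by omega), if_pos (by omega), zero_sub, zpow_ofNat, I_sq, neg_one_mul]
  · rw [hF n hn]; simp

end Parity

lemma two_part4_add_two_part4 {d : ℤ} {G H : PowerSeries ℂ}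
    (hG : ∀ n : ℕ, ¬ ((n : ℤ) % 2 = d % 2) → coeff n G = 0)
    (hH : ∀ n : ℕ, ¬ ((n : ℤ) % 2 = d % 2) → coeff n H = 0) :
    (2 : ℂ) • part4 (d + 2) G + (2 : ℂ) • part4 d H =
      G + H - I ^ (-d) • rescale I (G - H) := by
  rw [map_sub, smul_sub, I_zpow_neg_smul_rescale_I hG, I_zpow_neg_smul_rescale_I hH]
  linear_combination (norm := module) part4_add_part4_add_two hG + part4_add_part4_add_two hH

lemma sum_eq_sum_filter_two_add_sum_filter_zero {J M : Type*} [Fintype J] [AddCommMonoid M]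
    {σ : J → ℤ} (hσ : ∀ j, Even (σ j)) (f : J → M) :
    ∑ j, f j = ∑ j ∈ Finset.univ.filter (fun j => σ j % 4 = 2), f j +
      ∑ j ∈ Finset.univ.filter (fun j => σ j % 4 = 0), f j := by
  rw [← Finset.sum_filter_add_sum_filter_not Finset.univ (fun j => σ j % 4 = 2)]
  congr 1
  refine Finset.sum_congr (Finset.filter_congr fun j _ => ?_) fun _ _ => rfl
  obtain ⟨m, hm⟩ := hσ j
  omega

theorem two_part4_G_add_two_part4_H (q : ℝ) (d : ℤ) (J : Type*) [Fintype J]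
    (a k : J → ℝ) (σ : J → ℤ) (hσ : ∀ j, Even (σ j))
    (ε : J → ℂ) (hε : ∀ j, ε j = if σ j % 4 = 2 then 1 else -1)
    (G H : PowerSeries ℂ)
    (hG : G = pgauss (q : ℂ) * ∑ j, PowerSeries.C (a j : ℂ) * pexp ((k j : ℂ)))
    (hH : H = pgauss (q : ℂ) * ∑ j, PowerSeries.C (ε j * (a j : ℂ)) * pexp ((k j : ℂ)))
    (hGpar : ∀ n : ℕ, ¬ ((n : ℤ) % 2 = d % 2) → PowerSeries.coeff n G = 0)
    (hHpar : ∀ n : ℕ, ¬ ((n : ℤ) % 2 = d % 2) → PowerSeries.coeff n H = 0) :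
    (2 : ℂ) • part4 (d + 2) G + (2 : ℂ) • part4 d H =
      (2 : ℂ) • (pgauss (q : ℂ) * ∑ j ∈ Finset.univ.filter (fun j => σ j % 4 = 2),
          PowerSeries.C (a j : ℂ) * pexp ((k j : ℂ))) -
      (2 : ℂ) • ((Complex.I ^ (-d)) •
        (pgauss (-(q : ℂ)) * ∑ j ∈ Finset.univ.filter (fun j => σ j % 4 = 0),
          PowerSeries.C (a j : ℂ) * pexp (Complex.I * (k j : ℂ)))) := by
  set S₂ := ∑ j ∈ Finset.univ.filter (fun j => σ j % 4 = 2), C (a j : ℂ) * pexp (k j : ℂ)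
  set S₀ := ∑ j ∈ Finset.univ.filter (fun j => σ j % 4 = 0), C (a j : ℂ) * pexp (k j : ℂ)
  have hG_split : G = pgauss q * S₂ + pgauss q * S₀ := by
    rw [hG, sum_eq_sum_filter_two_add_sum_filter_zero hσ, mul_add]
  have hH_split : H = pgauss q * S₂ - pgauss q * S₀ := by
    rw [hH, sum_eq_sum_filter_two_add_sum_filter_zero hσ, ← mul_sub, sub_eq_add_neg,
      ← Finset.sum_neg_distrib]
    congr 2 <;> exact Finset.sum_congr rfl fun j hj => by simp [hε, (Finset.mem_filter.1 hj).2]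
  have h_rescale : pgauss (-(q : ℂ)) * ∑ j ∈ Finset.univ.filter (fun j => σ j % 4 = 0),
      C (a j : ℂ) * pexp (I * (k j : ℂ)) = rescale I (pgauss q * S₀) := by
    simp only [S₀, map_mul, map_sum, rescale_pgauss, rescale_pexp, rescale_C, I_sq, neg_one_mul]
  rw [two_part4_add_two_part4 hGpar hHpar, h_rescale, hG_split, hH_split, add_sub_sub_cancel,
    map_add]
  module
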